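/- arXiv:1506.04208 — 2 statements merged into one kernel-verified Lean document; each statement's English description precedes it below -/
import Mathlib

section
/- Let A be a bounded positive operator on a separable real Hilbert space H = H1 ⊕ H2, fix an ordered orthonormal basis of H2, and set Aⁿ := Pⁿ A Pⁿ. Let Tⁿ be a short of Aⁿ to H1 for each n and let T be a short of A to H1. Then Tⁿ converges to T in the weak operator topology: ⟨Tⁿ x, y⟩ → ⟨T x, y⟩ as n → ∞, for all x, y ∈ H. -/
open MeasureTheory ProbabilityTheory Filter Topology
open scoped RealInnerProductSpace

/-!
Since `Pⁿ` is self-adjoint, fixes `H1` pointwise and satisfies `Pⁿ Pᵐ = Pⁿ` for `n ≤ m`, both `T`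
and `Tᵐ` (`m ≥ n`) compete for the short of `Aⁿ = Pⁿ A Pⁿ`, so `Tⁿ` decreases and stays above `T`.
A decreasing sequence of positive operators has a weak limit `L`: the quadratic forms converge
monotonically, polarisation gives a limiting symmetric form, and Hellinger–Toeplitz makes the
associated operator bounded. The limit is positive, has range in `H1`, and `L ≤ A` because
`Pⁿ → 1` strongly; maximality of `T` then gives `L ≤ T ≤ L`.
-/

noncomputable section

variable {H : Type*} [NormedAddCommGroup H] [InnerProductSpace ℝ H] [CompleteSpace H]

def projL (S : Submodule ℝ H) [CompleteSpace S] : H →L[ℝ] H :=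
  S.subtypeL.comp S.orthogonalProjectionOnto

def projFin (e : ℕ → H) (n : ℕ) : H →L[ℝ] H :=
  ∑ i ∈ Finset.range n, (innerSL ℝ (e i)).smulRight (e i)

/-- The orthogonal projection `Pⁿ = P_{H1} + P_{H2ⁿ}` onto `H1 ⊕ H2ⁿ`. -/
def Pn (H1 : Submodule ℝ H) [CompleteSpace H1] (e : ℕ → H) (n : ℕ) : H →L[ℝ] H :=
  projL H1 + projFin e n

def IsShort (A T : H →L[ℝ] H) (S : Submodule ℝ H) : Prop :=
  T.IsPositive ∧ (A - T).IsPositive ∧ (∀ x, T x ∈ S) ∧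
    ∀ X : H →L[ℝ] H, X.IsPositive → (A - X).IsPositive → (∀ x, X x ∈ S) →
      (T - X).IsPositive

open ContinuousLinearMap

theorem IsSelfAdjoint.mul_mul_self_eq_of_mul_eq {R : Type*} [Monoid R] [StarMul R] {p x : R}
    (hp : IsSelfAdjoint p) (hx : IsSelfAdjoint x) (h : p * x = x) : p * x * p = x := by
  have hxp : x * p = x := by simpa [hp.star_eq, hx.star_eq] using congrArg star h
  rw [h, hxp]

section Operators

variable {E : Type*} [NormedAddCommGroup E] [InnerProductSpace ℝ E]

namespace ContinuousLinearMap

theorem inner_le_inner_of_le {f g : E →L[ℝ] E} (h : f ≤ g) (x : E) : ⟪f x, x⟫ ≤ ⟪g x, x⟫ := by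
  simpa [inner_sub_left] using ((le_def f g).1 h).inner_nonneg_left x

theorem le_of_inner_le {f g : E →L[ℝ] E} (hf : f.IsSymmetric) (hg : g.IsSymmetric)
    (h : ∀ x, ⟪f x, x⟫ ≤ ⟪g x, x⟫) : f ≤ g :=
  (le_def f g).2 <| (isPositive_iff _).2
    ⟨by simpa using hg.sub hf, fun x => by simpa [inner_sub_left] using h x⟩

theorem conjugate_le_conjugate [CompleteSpace E] {p f g : E →L[ℝ] E} (hp : IsSelfAdjoint p)
    (h : f ≤ g) : p * f * p ≤ p * g * p := by
  rw [le_def] at h ⊢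
  simpa [hp.adjoint_eq, mul_sub, sub_mul, mul_def, comp_assoc] using h.conj_adjoint p

theorem le_of_tendsto_inner_self {S R : ℕ → E →L[ℝ] E} {f g : E →L[ℝ] E}
    (hf : f.IsSymmetric) (hg : g.IsSymmetric) (hSR : ∀ n, S n ≤ R n)
    (hS : ∀ x, Tendsto (fun n => ⟪S n x, x⟫) atTop (𝓝 ⟪f x, x⟫))
    (hR : ∀ x, Tendsto (fun n => ⟪R n x, x⟫) atTop (𝓝 ⟪g x, x⟫)) : f ≤ g :=
  le_of_inner_le hf hg fun x =>
    le_of_tendsto_of_tendsto' (hS x) (hR x) fun n => inner_le_inner_of_le (hSR n) x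

theorem tendsto_inner_mul_mul_self {P : ℕ → E →L[ℝ] E} (hP : ∀ n, (P n).IsSymmetric)
    (A : E →L[ℝ] E) {x : E} (hx : Tendsto (fun n => P n x) atTop (𝓝 x)) :
    Tendsto (fun n => ⟪(P n * A * P n) x, x⟫) atTop (𝓝 ⟪A x, x⟫) := by
  have h : ∀ n, ⟪(P n * A * P n) x, x⟫ = ⟪A (P n x), P n x⟫ := fun n => hP n _ _
  simp only [h]
  exact ((A.continuous.tendsto x).comp hx).inner hx

theorem exists_tendsto_inner_of_isSelfAdjoint [CompleteSpace E] {S : ℕ → E →L[ℝ] E}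
    (hS : ∀ n, IsSelfAdjoint (S n))
    (h : ∀ u v, ∃ c, Tendsto (fun n => ⟪S n u, v⟫) atTop (𝓝 c)) :
    ∃ L : E →L[ℝ] E, IsSelfAdjoint L ∧
      ∀ u v, Tendsto (fun n => ⟪S n u, v⟫) atTop (𝓝 ⟪L u, v⟫) := by
  choose B hB using h
  -- Banach–Steinhaus makes each `B u` a bounded functional, so Riesz represents it by `L₀ u`.
  let φ : E → StrongDual ℝ E := fun u =>
    continuousLinearMapOfTendsto (fun n => innerSL ℝ (S n u)) (f := B u) (tendsto_pi_nhds.2 (hB u))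
  let L₀ : E → E := fun u => (InnerProductSpace.toDual ℝ E).symm (φ u)
  have hL₀ : ∀ u v, ⟪L₀ u, v⟫ = B u v := fun u v => InnerProductSpace.toDual_symm_apply
  have hsymm : ∀ u v, ⟪L₀ u, v⟫ = ⟪u, L₀ v⟫ := fun u v => by
    rw [hL₀, ← real_inner_comm, hL₀]
    refine tendsto_nhds_unique (hB u v) ((hB v u).congr fun n => ?_)
    exact ((hS n).isSymmetric v u).trans (real_inner_comm _ _)
  let L₁ : E →ₗ[ℝ] E :=
    { toFun := L₀
      map_add' := fun u w => ext_inner_right ℝ fun v => by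
        simp only [hsymm, inner_add_left]
      map_smul' := fun c u => ext_inner_right ℝ fun v => by
        simp only [hsymm, real_inner_smul_left, RingHom.id_apply] }
  have hL₁ : L₁.IsSymmetric := hsymm
  refine ⟨⟨L₁, hL₁.continuous⟩, isSelfAdjoint_iff_isSymmetric.2 hL₁, fun u v => ?_⟩
  exact (hL₀ u v).symm ▸ hB u v

theorem exists_tendsto_inner_of_antitone [CompleteSpace E] {S : ℕ → E →L[ℝ] E}
    (hS : Antitone S) (hS0 : ∀ n, (S n).IsPositive) :
    ∃ L : E →L[ℝ] E, IsSelfAdjoint L ∧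
      ∀ u v, Tendsto (fun n => ⟪S n u, v⟫) atTop (𝓝 ⟪L u, v⟫) := by
  refine exists_tendsto_inner_of_isSelfAdjoint (fun n => (hS0 n).isSelfAdjoint) fun u v => ?_
  have hq : ∀ z, ∃ c, Tendsto (fun n => ⟪S n z, z⟫) atTop (𝓝 c) := fun z =>
    ⟨_, tendsto_atTop_ciInf (fun n m h => inner_le_inner_of_le (hS h) z)
      ⟨0, Set.forall_mem_range.2 fun n => (hS0 n).inner_nonneg_left z⟩⟩
  obtain ⟨a, ha⟩ := hq (u + v)
  obtain ⟨b, hb⟩ := hq (u - v)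
  have hpol : ∀ n, ⟪S n u, v⟫ = (⟪S n (u + v), u + v⟫ - ⟪S n (u - v), u - v⟫) / 4 := fun n => by
    simpa [RCLike.I_to_real] using (hS0 n).isSymmetric.inner_map_polarization u v
  exact ⟨(a - b) / 4, by simpa only [hpol] using (ha.sub hb).div_const 4⟩

end ContinuousLinearMap

theorem Submodule.mem_of_tendsto_inner {K : Submodule ℝ E} [K.HasOrthogonalProjection]
    {x : ℕ → E} {z : E} (hx : ∀ n, x n ∈ K)
    (h : ∀ y, Tendsto (fun n => ⟪x n, y⟫) atTop (𝓝 ⟪z, y⟫)) : z ∈ K := by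
  rw [← K.orthogonal_orthogonal]
  intro y hy
  rw [real_inner_comm]
  refine tendsto_nhds_unique (h y) ?_
  simp [Submodule.inner_right_of_mem_orthogonal (hx _) hy]

theorem IsShort.le_of_le_compression [CompleteSpace E] {A T P X : E →L[ℝ] E}
    {S : Submodule ℝ E} (hT : IsShort (P * A * P) T S) (hP : IsSelfAdjoint P)
    (hPS : ∀ z ∈ S, P z = z) (hX : X.IsPositive) (hXS : ∀ x, X x ∈ S) (hXA : X ≤ A) : X ≤ T := by
  have hPX : P * X * P = X :=
    hP.mul_mul_self_eq_of_mul_eq hX.isSelfAdjoint (ext fun x => hPS _ (hXS x))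
  exact hT.2.2.2 X hX (hPX ▸ conjugate_le_conjugate hP hXA) hXS

end Operators

section Truncation

variable {E : Type*} [NormedAddCommGroup E] [InnerProductSpace ℝ E]

open Classical in
/-- `H2ⁿ`. -/
abbrev spanFin (e : ℕ → E) (n : ℕ) : Submodule ℝ E :=
  Submodule.span ℝ ((Finset.range n).image e : Set E)

theorem spanFin_mono (e : ℕ → E) : Monotone (spanFin e) := fun _ _ h =>
  Submodule.span_mono (by gcongr)

theorem iSup_spanFin (e : ℕ → E) : ⨆ n, spanFin e n = Submodule.span ℝ (Set.range e) := by
  rw [Submodule.iSup_span]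
  congr 1
  ext x
  simp only [Finset.coe_image, Finset.coe_range, Set.mem_iUnion, Set.mem_image, Set.mem_Iio,
    Set.mem_range]
  exact ⟨fun ⟨_, k, _, hk⟩ => ⟨k, hk⟩, fun ⟨k, hk⟩ => ⟨k + 1, k, k.lt_succ_self, hk⟩⟩

theorem isOrtho_spanFin {H1 : Submodule ℝ E} {e : ℕ → E} (hemem : ∀ k, e k ∈ H1ᗮ) (n : ℕ) :
    H1 ⟂ spanFin e n := by
  rw [Submodule.isOrtho_comm, Submodule.isOrtho_iff_le, Submodule.span_le]
  simpa [Set.image_subset_iff, Set.subset_def] using fun k _ => hemem k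

theorem projFin_eq_starProjection {e : ℕ → E} (he : Orthonormal ℝ e) (n : ℕ) :
    projFin e n = (spanFin e n).starProjection := by
  classical
  ext x
  rw [(OrthonormalBasis.span he (Finset.range n)).starProjection_eq_sum_rankOne]
  simp [projFin, InnerProductSpace.rankOne_apply]
  exact (Finset.sum_coe_sort (Finset.range n) (fun i => ⟪e i, x⟫ • e i)).symm

variable (H1 : Submodule ℝ E) [CompleteSpace H1] {e : ℕ → E} (he : Orthonormal ℝ e)
include he

theorem Pn_eq_add_starProjection (n : ℕ) :
    Pn H1 e n = H1.starProjection + (spanFin e n).starProjection := by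
  rw [Pn, projFin_eq_starProjection he]
  rfl

theorem isSelfAdjoint_Pn [CompleteSpace E] (n : ℕ) : IsSelfAdjoint (Pn H1 e n) := by
  rw [Pn_eq_add_starProjection H1 he]
  exact (isSelfAdjoint_starProjection _).add (isSelfAdjoint_starProjection _)

theorem tendsto_Pn_apply (hspan : (Submodule.span ℝ (Set.range e)).topologicalClosure = H1ᗮ)
    (x : E) : Tendsto (fun n => Pn H1 e n x) atTop (𝓝 x) := by
  have hK : (⨆ n, spanFin e n).topologicalClosure = H1ᗮ := by rw [iSup_spanFin, hspan]
  have : (⨆ n, spanFin e n).topologicalClosure.HasOrthogonalProjection := by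
    rw [hK]
    infer_instance
  have hlim := Submodule.starProjection_tendsto_closure_iSup (spanFin e) (spanFin_mono e) x
  simp_rw [hK] at hlim
  simpa [Pn_eq_add_starProjection H1 he, Submodule.starProjection_add_starProjection_orthogonal]
    using hlim.const_add (H1.starProjection x)

variable (hemem : ∀ k, e k ∈ H1ᗮ)
include hemem

theorem Pn_apply_of_mem (n : ℕ) {z : E} (hz : z ∈ H1) : Pn H1 e n z = z := by
  rw [Pn_eq_add_starProjection H1 he, add_apply, Submodule.starProjection_eq_self_iff.mpr hz,
    (Submodule.starProjection_apply_eq_zero_iff (spanFin e n)).mpr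
      ((isOrtho_spanFin hemem n).le hz), add_zero]

theorem Pn_mul_Pn_of_le {n m : ℕ} (h : n ≤ m) : Pn H1 e n * Pn H1 e m = Pn H1 e n := by
  have h1 := (isOrtho_spanFin hemem m).starProjection_comp_starProjection
  have h2 := (isOrtho_spanFin hemem n).symm.starProjection_comp_starProjection
  have h3 := Submodule.starProjection_comp_starProjection_of_le (spanFin_mono e h)
  have h4 := Submodule.starProjection_comp_starProjection_of_le (le_refl H1)
  simp only [Pn_eq_add_starProjection H1 he, mul_add, add_mul, mul_def]
  rw [h1, h2, h3, h4, add_zero, zero_add]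

theorem Pn_mul_mul_Pn_of_le [CompleteSpace E] {n m : ℕ} (h : n ≤ m) (A : E →L[ℝ] E) :
    Pn H1 e n * (Pn H1 e m * A * Pn H1 e m) * Pn H1 e n = Pn H1 e n * A * Pn H1 e n := by
  have h1 := Pn_mul_Pn_of_le H1 he hemem h
  have h2 : Pn H1 e m * Pn H1 e n = Pn H1 e n := by
    simpa [(isSelfAdjoint_Pn H1 he _).star_eq] using congrArg star h1
  calc _ = (Pn H1 e n * Pn H1 e m) * A * (Pn H1 e m * Pn H1 e n) := by simp only [mul_assoc]
    _ = _ := by rw [h1, h2]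

end Truncation

theorem short_truncation_tendsto_weakOperatorTopology_general
    (H1 : Submodule ℝ H) [CompleteSpace H1]
    (A : H →L[ℝ] H) (hA : A.IsPositive)
    (e : ℕ → H) (he : Orthonormal ℝ e) (hemem : ∀ k, e k ∈ H1ᗮ)
    (hspan : (Submodule.span ℝ (Set.range e)).topologicalClosure = H1ᗮ)
    (Tn : ℕ → H →L[ℝ] H)
    (hTn : ∀ n, IsShort (Pn H1 e n * A * Pn H1 e n) (Tn n) H1)
    (T : H →L[ℝ] H) (hT : IsShort A T H1) :
    ∀ x y : H, Tendsto (fun n => ⟪Tn n x, y⟫) atTop (𝓝 ⟪T x, y⟫) := by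
  obtain ⟨hTpos, hTA, hTH1, hTmax⟩ := hT
  have hTnpos n := (hTn n).1
  have hTnA n := (hTn n).2.1
  have hTnH1 n := (hTn n).2.2.1
  have hPsa := isSelfAdjoint_Pn H1 he
  have hPfix : ∀ n, ∀ z ∈ H1, Pn H1 e n z = z := fun n _ => Pn_apply_of_mem H1 he hemem n
  have hT_le : ∀ n, T ≤ Tn n := fun n =>
    (hTn n).le_of_le_compression (hPsa n) (hPfix n) hTpos hTH1 hTA
  have hanti : Antitone Tn := fun n m h =>
    ((Pn_mul_mul_Pn_of_le H1 he hemem h A).symm ▸ hTn n).le_of_le_compression (hPsa n) (hPfix n)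
      (hTnpos m) (hTnH1 m) (hTnA m)
  obtain ⟨L, hLsa, hL⟩ := exists_tendsto_inner_of_antitone hanti hTnpos
  have hLpos : 0 ≤ L := le_of_tendsto_inner_self isPositive_zero.isSymmetric hLsa.isSymmetric
    (fun n => (nonneg_iff_isPositive _).2 (hTnpos n)) (fun _ => tendsto_const_nhds)
    (fun x => hL x x)
  have hLA : L ≤ A := le_of_tendsto_inner_self hLsa.isSymmetric hA.isSymmetric hTnA
    (fun x => hL x x)
    (fun x => tendsto_inner_mul_mul_self (fun n => (hPsa n).isSymmetric) A
      (tendsto_Pn_apply H1 he hspan x))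
  have hTL : T ≤ L := le_of_tendsto_inner_self hTpos.isSymmetric hLsa.isSymmetric hT_le
    (fun _ => tendsto_const_nhds) (fun x => hL x x)
  have hLH1 : ∀ x, L x ∈ H1 := fun x =>
    Submodule.mem_of_tendsto_inner (fun n => hTnH1 n x) (hL x)
  obtain rfl : L = T :=
    le_antisymm (hTmax L ((nonneg_iff_isPositive L).1 hLpos) hLA hLH1) hTL
  exact hL

/-- The shorts to `H1` of the truncations `Aⁿ = Pⁿ A Pⁿ` of a bounded
positive operator `A` converge to the short of `A` to `H1` in the weak operator
topology. -/
theorem short_truncation_tendsto_weakOperatorTopology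
    [SecondCountableTopology H]
    (H1 : Submodule ℝ H) [CompleteSpace H1]
    (A : H →L[ℝ] H) (hA : A.IsPositive)
    (e : ℕ → H) (he : Orthonormal ℝ e) (hemem : ∀ k, e k ∈ H1ᗮ)
    (hspan : (Submodule.span ℝ (Set.range e)).topologicalClosure = H1ᗮ)
    (Tn : ℕ → H →L[ℝ] H)
    (hTn : ∀ n, IsShort (Pn H1 e n * A * Pn H1 e n) (Tn n) H1)
    (T : H →L[ℝ] H) (hT : IsShort A T H1) :
    ∀ x y : H, Tendsto (fun n => ⟪Tn n x, y⟫) atTop (𝓝 ⟪T x, y⟫) :=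
  short_truncation_tendsto_weakOperatorTopology_general H1 A hA e he hemem hspan Tn hTn T hT
end
end

section
/- Let C be a bounded positive operator on an orthogonal direct sum H = H1 ⊕ H2 of Hilbert spaces and let Q be a C-symmetric oblique projection onto H2; set E := I − Q. Then E* C E = C E, and (P1 + Q)* (E* C E + P2 C P2) (P1 + Q) = C. -/
/-!
With `E = 1 - Q`, `C`-symmetry gives `Q* C E = C Q E = 0`, hence `E* C E = C E`.
Since `Q` and `P2` are idempotents with the same range, `Q P2 = P2` and `P2 Q = Q`, so
`E (P1 + Q) = E` and `P2 (P1 + Q) = Q`; the conjugated sum is therefore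
`E* C E + Q* C Q = C E + C Q = C`.
-/

open scoped RealInnerProductSpace

noncomputable section

variable {H : Type*} [NormedAddCommGroup H] [InnerProductSpace ℝ H] [CompleteSpace H]

theorem projL_eq_one_sub_projL_orthogonal (S : Submodule ℝ H) [CompleteSpace S] :
    projL S = 1 - projL Sᗮ := by
  change S.starProjection = 1 - Sᗮ.starProjection
  rw [Submodule.starProjection_orthogonal, ContinuousLinearMap.one_def, sub_sub_cancel]

theorem IsIdempotentElem.mul_eq_right_of_range_le {R M : Type*} [Semiring R]
    [TopologicalSpace M] [AddCommMonoid M] [Module R M] {p q : M →L[R] M}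
    (hp : IsIdempotentElem p) (h : q.range ≤ p.range) : p * q = q := by
  have hp' := ContinuousLinearMap.isIdempotentElem_toLinearMap_iff.mpr hp
  exact ContinuousLinearMap.coe_inj.mp
    ((LinearMap.IsIdempotentElem.comp_eq_right_iff hp' q.toLinearMap).mpr h)

section StarRing

variable {R : Type*} [Ring R] [StarRing R] {p q c : R}

theorem star_one_sub_mul_mul_one_sub (hq : IsIdempotentElem q) (hqc : c * q = star q * c) :
    star (1 - q) * c * (1 - q) = c * (1 - q) := by
  have hcross : star q * c * (1 - q) = 0 := by
    rw [← hqc, mul_assoc, mul_sub, mul_one, hq.eq, sub_self, mul_zero]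
  rw [star_sub, star_one, sub_mul, sub_mul, hcross, one_mul, sub_zero]

theorem conj_one_sub_add_eq_of_isIdempotentElem (hq : IsIdempotentElem q) (hp : IsStarProjection p)
    (hqp : q * p = p) (hpq : p * q = q) (hqc : c * q = star q * c) :
    star (1 - p + q) * (star (1 - q) * c * (1 - q) + p * c * p) * (1 - p + q) = c := by
  have hE : (1 - q) * (1 - p + q) = 1 - q := by
    rw [mul_add, hq.one_sub_mul_self, add_zero, mul_sub, mul_one, sub_mul, one_mul, hqp,
      sub_self, sub_zero]
  have hP : p * (1 - p + q) = q := by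
    rw [mul_add, mul_sub, mul_one, hp.isIdempotentElem.eq, sub_self, zero_add, hpq]
  calc star (1 - p + q) * (star (1 - q) * c * (1 - q) + p * c * p) * (1 - p + q)
      = star ((1 - q) * (1 - p + q)) * c * ((1 - q) * (1 - p + q))
        + star (p * (1 - p + q)) * c * (p * (1 - p + q)) := by
        rw [star_mul, star_mul, hp.isSelfAdjoint.star_eq, mul_add (star _), add_mul]
        simp only [mul_assoc]
    _ = star (1 - q) * c * (1 - q) + star q * c * q := by rw [hE, hP]
    _ = c := by
      rw [star_one_sub_mul_mul_one_sub hq hqc, ← hqc, mul_assoc, hq.eq, ← mul_add,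
        sub_add_cancel, mul_one]

end StarRing

theorem oblique_projection_factorization_general
    (H1 : Submodule ℝ H) [CompleteSpace H1]
    (C : H →L[ℝ] H)
    (Q : H →L[ℝ] H)
    (hQidem : Q * Q = Q) (hQrange : Set.range Q = (H1ᗮ : Set H))
    (hQsymm : C * Q = ContinuousLinearMap.adjoint Q * C) :
    ContinuousLinearMap.adjoint (1 - Q) * C * (1 - Q) = C * (1 - Q) ∧
    ContinuousLinearMap.adjoint (projL H1 + Q) *
        (ContinuousLinearMap.adjoint (1 - Q) * C * (1 - Q) + projL H1ᗮ * C * projL H1ᗮ) *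
        (projL H1 + Q)
      = C := by
  have hQ : IsIdempotentElem Q := hQidem
  have hP2 : IsStarProjection (projL H1ᗮ) := isStarProjection_starProjection
  have hrange : Q.range = (projL H1ᗮ).range := by
    rw [show projL H1ᗮ = H1ᗮ.starProjection from rfl, Submodule.range_starProjection]
    exact SetLike.coe_injective (by rw [LinearMap.coe_range]; exact hQrange)
  simp only [← ContinuousLinearMap.star_eq_adjoint] at hQsymm ⊢
  rw [projL_eq_one_sub_projL_orthogonal H1]
  exact ⟨star_one_sub_mul_mul_one_sub hQ hQsymm,
    conj_one_sub_add_eq_of_isIdempotentElem hQ hP2 (hQ.mul_eq_right_of_range_le hrange.ge)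
      (hP2.isIdempotentElem.mul_eq_right_of_range_le hrange.le) hQsymm⟩

/-- If `C` is a bounded positive operator on `H = H1 ⊕ H2`
(here `H2 = H1ᗮ`) and `Q` is a `C`-symmetric oblique projection onto `H2`, then with
`E := I − Q` we have `E* C E = C E` and `(P1 + Q)* (E* C E + P2 C P2) (P1 + Q) = C`. -/
theorem oblique_projection_factorization
    (H1 : Submodule ℝ H) [CompleteSpace H1]
    (C : H →L[ℝ] H) (hC : C.IsPositive)
    (Q : H →L[ℝ] H)
    (hQidem : Q * Q = Q) (hQrange : Set.range Q = (H1ᗮ : Set H))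
    (hQsymm : C * Q = ContinuousLinearMap.adjoint Q * C) :
    ContinuousLinearMap.adjoint (1 - Q) * C * (1 - Q) = C * (1 - Q) ∧
    ContinuousLinearMap.adjoint (projL H1 + Q) *
        (ContinuousLinearMap.adjoint (1 - Q) * C * (1 - Q) + projL H1ᗮ * C * projL H1ᗮ) *
        (projL H1 + Q)
      = C :=
  oblique_projection_factorization_general H1 C Q hQidem hQrange hQsymm

end
end
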